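/- arXiv:1303.0594 — 3 statements merged into one kernel-verified Lean document; each statement's English description precedes it below -/
import Mathlib

section
/- Let d ≥ 1 and m₂, m₃, m₄ be real numbers, and define the (d+2)×(d+2) symmetric matrix R_d with block structure: R_d(1,1) = 1, R_d(1, d+2) = R_d(d+2, 1) = d·m₂, the middle d×d block equals m₂·I_d, R_d(k, d+2) = R_d(d+2, k) = m₃ for 2 ≤ k ≤ d+1, R_d(d+2, d+2) = d(m₄ − m₂²) + d²m₂², and all other entries zero. Then the characteristic polynomial of R_d factors as det(R_d − λI) = ±(m₂ − λ)^{d−1} · (α₀ + α₁λ + α₂λ² − λ³), where α₀ = (m₄m₂ − m₂³ − m₃²)d, α₁ = −m₂³d² + (m₂³ + m₃² + m₂² − m₄ − m₄m₂)d − m₂, and α₂ = m₂²d² + (m₄ − m₂²)d + m₂ + 1. -/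
/-!
Put the `d` middle coordinates first. Then `R_d - λ I` is a block matrix whose top-left block is
`(m₂ - λ) I_d` and whose off-diagonal blocks are `d` copies of the row `(0, m₃)`, so for `λ ≠ m₂`
the Schur complement is the corner `[[1 - λ, d m₂], [d m₂, q - λ]]`, `q = R_d(d+2, d+2)`, with
`d m₃² / (m₂ - λ)` subtracted from its last entry. Hence
`det (R_d - λ I) = (m₂ - λ)^(d-1) ((m₂ - λ) ((1 - λ)(q - λ) - d² m₂²) - d m₃² (1 - λ))`,
first off `λ = m₂` and then everywhere by continuity; expanding gives the cubic with sign `+`.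
-/

open Matrix

/-- The structured `(d+2) × (d+2)` matrix `R_d` (expected Gram matrix of
`[1, x₁, …, x_d, ∑ x_k²]` with moments `m₂, m₃, m₄`), indexed by
`Fin 1 ⊕ Fin d ⊕ Fin 1`. -/
def Rmat (d : ℕ) (m₂ m₃ m₄ : ℝ) :
    Matrix (Fin 1 ⊕ Fin d ⊕ Fin 1) (Fin 1 ⊕ Fin d ⊕ Fin 1) ℝ :=
  fun i j =>
    match i, j with
    | Sum.inl _, Sum.inl _ => 1
    | Sum.inl _, Sum.inr (Sum.inr _) => d * m₂
    | Sum.inr (Sum.inr _), Sum.inl _ => d * m₂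
    | Sum.inr (Sum.inl k), Sum.inr (Sum.inl l) => if k = l then m₂ else 0
    | Sum.inr (Sum.inl _), Sum.inr (Sum.inr _) => m₃
    | Sum.inr (Sum.inr _), Sum.inr (Sum.inl _) => m₃
    | Sum.inr (Sum.inr _), Sum.inr (Sum.inr _) => d * (m₄ - m₂ ^ 2) + d ^ 2 * m₂ ^ 2
    | _, _ => 0

namespace Matrix

theorem det_fromBlocks_smul_one₁₁ {K m n : Type*} [Field K] [Fintype m] [Fintype n]
    [DecidableEq m] [DecidableEq n] {a : K} (ha : a ≠ 0) (B : Matrix m n K) (C : Matrix n m K)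
    (D : Matrix n n K) :
    (fromBlocks (a • 1) B C D).det = a ^ Fintype.card m * (D - a⁻¹ • (C * B)).det := by
  have hfactor :
      fromBlocks (a • 1) B C D = fromBlocks (a • 1) 0 0 1 * fromBlocks 1 (a⁻¹ • B) C D := by
    simp [fromBlocks_multiply, smul_smul, ha]
  rw [hfactor, det_mul, det_fromBlocks_zero₂₁, det_fromBlocks_one₁₁, det_smul, det_one, det_one,
    mul_one, mul_one, Matrix.mul_smul]

theorem replicateCol_mul_replicateRow {α n ι : Type*} [NonUnitalNonAssocSemiring α] [Fintype ι]
    (u v : n → α) : replicateCol ι u * replicateRow ι v = Fintype.card ι • vecMulVec u v := by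
  ext i j
  simp [mul_apply, vecMulVec_apply]

end Matrix

def rmatBlockEquiv (d : ℕ) : Fin d ⊕ Fin 2 ≃ Fin 1 ⊕ Fin d ⊕ Fin 1 where
  toFun := Sum.elim (Sum.inr ∘ Sum.inl) ![Sum.inl 0, Sum.inr (Sum.inr 0)]
  invFun := Sum.elim (fun _ => Sum.inr 0) (Sum.elim Sum.inl fun _ => Sum.inr 1)
  left_inv := by rintro (k | i) <;> [rfl; fin_cases i <;> rfl]
  right_inv := by rintro (i | k | i) <;> [fin_cases i; rfl; fin_cases i] <;> rfl

theorem Rmat_sub_smul_one_submatrix (d : ℕ) (m₂ m₃ m₄ lam : ℝ) :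
    (Rmat d m₂ m₃ m₄ - lam • 1).submatrix (rmatBlockEquiv d) (rmatBlockEquiv d) =
      fromBlocks ((m₂ - lam) • 1) (replicateRow (Fin d) ![0, m₃]) (replicateCol (Fin d) ![0, m₃])
        !![1 - lam, d * m₂; d * m₂, d * (m₄ - m₂ ^ 2) + d ^ 2 * m₂ ^ 2 - lam] := by
  ext (k | i) (l | j)
  all_goals simp only [submatrix_apply, Matrix.sub_apply, Matrix.smul_apply, one_apply,
    rmatBlockEquiv, Equiv.coe_fn_mk, Sum.elim_inl, Sum.elim_inr, Function.comp_apply,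
    fromBlocks_apply₁₁, fromBlocks_apply₁₂, fromBlocks_apply₂₁, fromBlocks_apply₂₂,
    replicateRow_apply, replicateCol_apply, of_apply]
  · by_cases h : k = l <;> simp [Rmat, h]
  all_goals try fin_cases i
  all_goals try fin_cases j
  all_goals simp [Rmat]

theorem det_Rmat_sub_smul_one_of_ne (d : ℕ) (m₂ m₃ m₄ lam : ℝ) (h : m₂ - lam ≠ 0) :
    (Rmat d m₂ m₃ m₄ - lam • 1).det = (m₂ - lam) ^ d *
      ((1 - lam) * (d * (m₄ - m₂ ^ 2) + d ^ 2 * m₂ ^ 2 - lam - (m₂ - lam)⁻¹ * (d * m₃ ^ 2))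
        - (d * m₂) ^ 2) := by
  rw [← det_submatrix_equiv_self (rmatBlockEquiv d), Rmat_sub_smul_one_submatrix,
    det_fromBlocks_smul_one₁₁ h, replicateCol_mul_replicateRow, det_fin_two]
  simp only [Matrix.sub_apply, Matrix.smul_apply, vecMulVec_apply, of_apply, cons_val',
    cons_val_zero, cons_val_one, empty_val', cons_val_fin_one, Fintype.card_fin, smul_eq_mul]
  ring

theorem det_Rmat_sub_smul_one (d : ℕ) (hd : 1 ≤ d) (m₂ m₃ m₄ lam : ℝ) :
    (Rmat d m₂ m₃ m₄ - lam • 1).det = (m₂ - lam) ^ (d - 1) *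
      ((m₂ - lam) * ((1 - lam) * (d * (m₄ - m₂ ^ 2) + d ^ 2 * m₂ ^ 2 - lam) - (d * m₂) ^ 2)
        - (1 - lam) * (d * m₃ ^ 2)) := by
  revert lam
  refine funext_iff.mp (Continuous.ext_on (dense_compl_singleton m₂) ?_ ?_
    fun x (hx : x ≠ m₂) => ?_)
  · fun_prop
  · fun_prop
  rw [det_Rmat_sub_smul_one_of_ne d m₂ m₃ m₄ x (sub_ne_zero.mpr hx.symm),
    ← pow_sub_one_mul (by omega : d ≠ 0)]
  field_simp
  ring

/-- The characteristic polynomial of `R_d` factors as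
`det(R_d − λ I) = ±(m₂ − λ)^(d−1)·(α₀ + α₁ λ + α₂ λ² − λ³)`. -/
theorem Rmat_charpoly_factor (d : ℕ) (hd : 1 ≤ d) (m₂ m₃ m₄ lam : ℝ) :
    (Rmat d m₂ m₃ m₄ - lam • 1).det =
        (m₂ - lam) ^ (d - 1) *
          ((m₄ * m₂ - m₂ ^ 3 - m₃ ^ 2) * d +
            (-m₂ ^ 3 * d ^ 2 + (m₂ ^ 3 + m₃ ^ 2 + m₂ ^ 2 - m₄ - m₄ * m₂) * d - m₂) * lam +
            (m₂ ^ 2 * d ^ 2 + (m₄ - m₂ ^ 2) * d + m₂ + 1) * lam ^ 2 - lam ^ 3) ∨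
      (Rmat d m₂ m₃ m₄ - lam • 1).det =
        -((m₂ - lam) ^ (d - 1) *
          ((m₄ * m₂ - m₂ ^ 3 - m₃ ^ 2) * d +
            (-m₂ ^ 3 * d ^ 2 + (m₂ ^ 3 + m₃ ^ 2 + m₂ ^ 2 - m₄ - m₄ * m₂) * d - m₂) * lam +
            (m₂ ^ 2 * d ^ 2 + (m₄ - m₂ ^ 2) * d + m₂ + 1) * lam ^ 2 - lam ^ 3)) := by
  left
  rw [det_Rmat_sub_smul_one d hd]
  ring
end

section
/- Let d ≥ 1, and let m₂, m₄ be the second and fourth moments of a non-degenerate distribution with m₄ > m₂² > 0 (and third moment m₃ = 0). The matrix R_d (with R_d(1,1)=1, middle block m₂I_d, R_d(1,d+2)=R_d(d+2,1)=dm₂, R_d(d+2,d+2)=d(m₄−m₂²)+d²m₂², other entries zero) has eigenvalues: m₂ with multiplicity d, and the two roots of λ² − ζλ + d(m₄ − m₂²) = 0 where ζ = d(m₄ − m₂²) + d²m₂² + 1. In particular its smallest eigenvalue is min{ m₂, (ζ − √(ζ² − 4d(m₄ − m₂²)))/2 }. -/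
/-!
Moving the two corner coordinates next to each other makes `R_d` block diagonal,
`m₂ • 1 ⊕ !![ζ - 1, d m₂; d m₂, 1]`, so its characteristic polynomial is
`(X - m₂)^d (X² - ζ X + d (m₄ - m₂²))`. The eigenvalues of a symmetric matrix, with
multiplicity, are the roots of its characteristic polynomial, and the quadratic factor splits
over `ℝ`: with `a = d (m₄ - m₂²)` and `b = d² m₂²` its discriminant is `(a + b - 1)² + 4b ≥ 0`.
-/

open Matrix

open Polynomial

def cornerEquiv (d : ℕ) : Fin 1 ⊕ Fin d ⊕ Fin 1 ≃ Fin d ⊕ Fin 2 :=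
  (Equiv.sumComm _ _).trans <| (Equiv.sumAssoc _ _ _).trans <|
    Equiv.sumCongr (Equiv.refl _) finSumFinEquiv

lemma reindex_Rmat_eq_fromBlocks (d : ℕ) (m₂ m₄ : ℝ) :
    reindex (cornerEquiv d) (cornerEquiv d) (Rmat d m₂ 0 m₄) =
      fromBlocks (diagonal fun _ => m₂) 0 0
        !![d * (m₄ - m₂ ^ 2) + d ^ 2 * m₂ ^ 2, d * m₂; d * m₂, 1] := by
  have h₀ : finSumFinEquiv.symm (0 : Fin (1 + 1)) = (Sum.inl 0 : Fin 1 ⊕ Fin 1) :=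
    finSumFinEquiv_symm_apply_castAdd 0
  have h₁ : finSumFinEquiv.symm (1 : Fin (1 + 1)) = (Sum.inr 0 : Fin 1 ⊕ Fin 1) :=
    finSumFinEquiv_symm_last
  ext (k | i) (l | j)
  · by_cases h : k = l <;> simp [Rmat, cornerEquiv, h]
  · fin_cases j <;> simp [Rmat, cornerEquiv, h₀, h₁]
  · fin_cases i <;> simp [Rmat, cornerEquiv, h₀, h₁]
  · fin_cases i <;> fin_cases j <;> simp [Rmat, cornerEquiv, h₀, h₁]

lemma Rmat_charpoly (d : ℕ) (m₂ m₄ : ℝ) :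
    (Rmat d m₂ 0 m₄).charpoly = (X - C m₂) ^ d *
      (X ^ 2 - C (d * (m₄ - m₂ ^ 2) + d ^ 2 * m₂ ^ 2 + 1) * X + C (d * (m₄ - m₂ ^ 2))) := by
  rw [← charpoly_reindex (cornerEquiv d), reindex_Rmat_eq_fromBlocks, charpoly_fromBlocks_zero₁₂,
    charpoly_diagonal, charpoly_fin_two, trace_fin_two_of, det_fin_two_of, Finset.prod_const,
    Finset.card_univ, Fintype.card_fin]
  congr 3
  ring

lemma X_sq_sub_C_mul_X_add_C_eq_mul {ζ c : ℝ} (h : 0 ≤ ζ ^ 2 - 4 * c) :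
    (X ^ 2 - C ζ * X + C c : ℝ[X]) =
      (X - C ((ζ + √(ζ ^ 2 - 4 * c)) / 2)) * (X - C ((ζ - √(ζ ^ 2 - 4 * c)) / 2)) := by
  have hs := Real.sq_sqrt h
  set s := √(ζ ^ 2 - 4 * c)
  have hsum : C ζ = C ((ζ + s) / 2) + C ((ζ - s) / 2) := by rw [← map_add]; congr 1; ring
  have hprod : C c = C ((ζ + s) / 2) * C ((ζ - s) / 2) := by
    rw [← map_mul]; congr 1; linear_combination hs / 4
  rw [hsum, hprod]
  ring

lemma Matrix.IsHermitian.map_eigenvalues_eq_of_charpoly_eq {n : Type*} [Fintype n]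
    [DecidableEq n] {A : Matrix n n ℝ} (hA : A.IsHermitian) {s : Multiset ℝ}
    (h : A.charpoly = (s.map fun x => X - C x).prod) :
    Finset.univ.val.map hA.eigenvalues = s := by
  simpa [RCLike.ofReal_real_eq_id, h, roots_multiset_prod_X_sub_C] using
    hA.roots_charpoly_eq_eigenvalues.symm

lemma Nat.card_subtype_eq_count_map {ι α : Type*} [Fintype ι] [DecidableEq α] (f : ι → α)
    (x : α) :
    Nat.card {i // f i = x} = (Finset.univ.val.map f).count x := by
  rw [Nat.card_eq_fintype_card, Fintype.card_subtype, Multiset.count_map]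
  simp [Finset.card_def, eq_comm]

section SpectrumOfMultiset

variable {ι : Type*} [Fintype ι] {f : ι → ℝ} {d : ℕ} {μ p q : ℝ}

lemma exists_eq_iff_of_map_univ_eq
    (h : Finset.univ.val.map f = d • {μ} + ({p, q} : Multiset ℝ)) (x : ℝ) :
    (∃ i, f i = x) ↔ x ∈ d • {μ} + ({p, q} : Multiset ℝ) := by
  rw [← h, Multiset.mem_map]
  simp

lemma eq_or_eq_or_eq_of_map_univ_eq
    (h : Finset.univ.val.map f = d • {μ} + ({p, q} : Multiset ℝ)) (i : ι) :
    f i = μ ∨ f i = p ∨ f i = q := by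
  have hi := (exists_eq_iff_of_map_univ_eq h (f i)).1 ⟨i, rfl⟩
  simp only [Multiset.mem_add, Multiset.mem_nsmul, Multiset.mem_singleton, Multiset.insert_eq_cons,
    Multiset.mem_cons] at hi
  tauto

lemma le_card_of_map_univ_eq (h : Finset.univ.val.map f = d • {μ} + ({p, q} : Multiset ℝ)) :
    d ≤ Nat.card {i // f i = μ} := by
  classical
  rw [Nat.card_subtype_eq_count_map, h, Multiset.count_add, Multiset.count_nsmul,
    Multiset.count_singleton_self, mul_one]
  exact Nat.le_add_right _ _

lemma iInf_eq_min_of_map_univ_eq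
    (h : Finset.univ.val.map f = d • {μ} + ({p, q} : Multiset ℝ))
    (hd : d ≠ 0) (hqp : q ≤ p) : ⨅ i, f i = min μ q := by
  obtain ⟨i, hi⟩ := (exists_eq_iff_of_map_univ_eq h μ).2 (by simp [hd])
  obtain ⟨j, hj⟩ := (exists_eq_iff_of_map_univ_eq h q).2 (by simp)
  have hbdd := (Set.finite_range f).bddBelow
  have : Nonempty ι := ⟨i⟩
  refine le_antisymm (le_min (hi ▸ ciInf_le hbdd i) (hj ▸ ciInf_le hbdd j)) (le_ciInf fun k => ?_)
  rcases eq_or_eq_or_eq_of_map_univ_eq h k with hk | hk | hk <;> rw [hk]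
  · exact min_le_left _ _
  · exact (min_le_right _ _).trans hqp
  · exact min_le_right _ _

end SpectrumOfMultiset

theorem Rmat_eigenvalues_symmetric_general (d : ℕ) (hd : 1 ≤ d) (m₂ m₄ : ℝ)
    (hH : (Rmat d m₂ 0 m₄).IsHermitian) :
    (∀ i, hH.eigenvalues i = m₂ ∨
        hH.eigenvalues i =
          ((d * (m₄ - m₂ ^ 2) + d ^ 2 * m₂ ^ 2 + 1) +
              Real.sqrt ((d * (m₄ - m₂ ^ 2) + d ^ 2 * m₂ ^ 2 + 1) ^ 2
                - 4 * d * (m₄ - m₂ ^ 2))) / 2 ∨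
        hH.eigenvalues i =
          ((d * (m₄ - m₂ ^ 2) + d ^ 2 * m₂ ^ 2 + 1) -
              Real.sqrt ((d * (m₄ - m₂ ^ 2) + d ^ 2 * m₂ ^ 2 + 1) ^ 2
                - 4 * d * (m₄ - m₂ ^ 2))) / 2) ∧
      d ≤ Nat.card {i // hH.eigenvalues i = m₂} ∧
      (⨅ i, hH.eigenvalues i) =
        min m₂
          (((d * (m₄ - m₂ ^ 2) + d ^ 2 * m₂ ^ 2 + 1) -
              Real.sqrt ((d * (m₄ - m₂ ^ 2) + d ^ 2 * m₂ ^ 2 + 1) ^ 2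
                - 4 * d * (m₄ - m₂ ^ 2))) / 2) := by
  simp only [mul_assoc (4 : ℝ)]
  set a : ℝ := d * (m₄ - m₂ ^ 2)
  set b : ℝ := d ^ 2 * m₂ ^ 2
  have hdisc : 0 ≤ (a + b + 1) ^ 2 - 4 * a := by
    rw [show (a + b + 1) ^ 2 - 4 * a = (a + b - 1) ^ 2 + 4 * (d * m₂) ^ 2 by ring]
    positivity
  have hspec : Finset.univ.val.map hH.eigenvalues = d • {m₂} +
      {(a + b + 1 + √((a + b + 1) ^ 2 - 4 * a)) / 2,
        (a + b + 1 - √((a + b + 1) ^ 2 - 4 * a)) / 2} :=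
    hH.map_eigenvalues_eq_of_charpoly_eq <| by
      rw [Rmat_charpoly, X_sq_sub_C_mul_X_add_C_eq_mul hdisc]
      simp only [Multiset.map_add, Multiset.map_nsmul, Multiset.prod_add, Multiset.prod_nsmul]
      simp
  exact ⟨eq_or_eq_or_eq_of_map_univ_eq hspec, le_card_of_map_univ_eq hspec,
    iInf_eq_min_of_map_univ_eq hspec (by omega)
      (by linarith [Real.sqrt_nonneg ((a + b + 1) ^ 2 - 4 * a)])⟩

/-- In the symmetric case (`m₃ = 0`), the eigenvalues of `R_d` are `m₂` with
multiplicity `d` and the two roots of `λ² − ζλ + d(m₄ − m₂²) = 0`, where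
`ζ = d(m₄ − m₂²) + d²m₂² + 1`; the smallest eigenvalue is
`min{m₂, (ζ − √(ζ² − 4d(m₄ − m₂²)))/2}`. -/
theorem Rmat_eigenvalues_symmetric (d : ℕ) (hd : 1 ≤ d) (m₂ m₄ : ℝ) (hm₂ : 0 < m₂)
    (hm₄ : m₂ ^ 2 < m₄) (hH : (Rmat d m₂ 0 m₄).IsHermitian) :
    (∀ i, hH.eigenvalues i = m₂ ∨
        hH.eigenvalues i =
          ((d * (m₄ - m₂ ^ 2) + d ^ 2 * m₂ ^ 2 + 1) +
              Real.sqrt ((d * (m₄ - m₂ ^ 2) + d ^ 2 * m₂ ^ 2 + 1) ^ 2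
                - 4 * d * (m₄ - m₂ ^ 2))) / 2 ∨
        hH.eigenvalues i =
          ((d * (m₄ - m₂ ^ 2) + d ^ 2 * m₂ ^ 2 + 1) -
              Real.sqrt ((d * (m₄ - m₂ ^ 2) + d ^ 2 * m₂ ^ 2 + 1) ^ 2
                - 4 * d * (m₄ - m₂ ^ 2))) / 2) ∧
      d ≤ Nat.card {i // hH.eigenvalues i = m₂} ∧
      (⨅ i, hH.eigenvalues i) =
        min m₂
          (((d * (m₄ - m₂ ^ 2) + d ^ 2 * m₂ ^ 2 + 1) -
              Real.sqrt ((d * (m₄ - m₂ ^ 2) + d ^ 2 * m₂ ^ 2 + 1) ^ 2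
                - 4 * d * (m₄ - m₂ ^ 2))) / 2) :=
  Rmat_eigenvalues_symmetric_general d hd m₂ m₄ hH
end

section
/- For the uniform distribution on [−1,1] (m₂ = 1/3, m₃ = 0, m₄ = 1/5) and any d ≥ 1, the smallest eigenvalue of the matrix R_d = diag-block matrix with R_d(1,1)=1, middle block (1/3)I_d, R_d(1,d+2)=R_d(d+2,1)=d/3, R_d(d+2,d+2)=(d/3)² + 4d/45, is (ζ − √(ζ² − 720d))/90 where ζ = 5d² + 4d + 45, and this value is strictly less than 1/3. -/
/-!
When `m₃ = 0` the matrix `R_d` splits into `m₂ • 1` on the middle `d` coordinates and the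
`2 × 2` block `[[1, d m₂], [d m₂, c]]` on the outer two. A root `μ < 1` of the block's
characteristic equation `(1 - μ) (c - μ) = (d m₂)²` is an eigenvalue, with eigenvector
`(d m₂, 0, μ - 1)`, and if also `μ ≤ m₂` it bounds the Rayleigh quotient from below, so it is
the smallest eigenvalue. For the uniform moments the characteristic equation is
`45 μ² - ζ μ + 4 d = 0`, whose smaller root is the claimed value;
it is below `1/3` because `(ζ - 30)² < ζ² - 720 d`.
-/

open Matrix

section Spectrum

variable {n : Type*} [Fintype n] [DecidableEq n]

theorem Matrix.mem_spectrum_of_mulVec_eq_smul {K : Type*} [Field K] {A : Matrix n n K} {μ : K}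
    {v : n → K} (hv0 : v ≠ 0) (hv : A *ᵥ v = μ • v) : μ ∈ spectrum K A := by
  rw [← Matrix.spectrum_toLin', ← Module.End.hasEigenvalue_iff_mem_spectrum]
  exact Module.End.hasEigenvalue_of_hasEigenvector
    ⟨Module.End.mem_eigenspace_iff.mpr (by simpa using hv), hv0⟩

namespace Matrix.IsHermitian

variable {A : Matrix n n ℝ} {μ : ℝ}

theorem le_eigenvalues_of_forall_le_dotProduct_mulVec (hA : A.IsHermitian)
    (hle : ∀ x, μ * (x ⬝ᵥ x) ≤ x ⬝ᵥ (A *ᵥ x)) (i : n) : μ ≤ hA.eigenvalues i := by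
  set v : n → ℝ := ⇑(hA.eigenvectorBasis i)
  have hv0 : v ≠ 0 := (WithLp.ofLp_eq_zero 2).ne.mpr (hA.eigenvectorBasis.orthonormal.ne_zero i)
  have hpos : 0 < v ⬝ᵥ v := by simpa using dotProduct_star_self_pos_iff.mpr hv0
  have := hle v
  rw [hA.mulVec_eigenvectorBasis, dotProduct_smul, smul_eq_mul] at this
  exact le_of_mul_le_mul_right this hpos

theorem iInf_eigenvalues_eq (hA : A.IsHermitian)
    (hle : ∀ x, μ * (x ⬝ᵥ x) ≤ x ⬝ᵥ (A *ᵥ x)) {v : n → ℝ} (hv0 : v ≠ 0)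
    (hv : A *ᵥ v = μ • v) : ⨅ i, hA.eigenvalues i = μ := by
  obtain ⟨i, hi⟩ : μ ∈ Set.range hA.eigenvalues := by
    rw [← hA.spectrum_real_eq_range_eigenvalues]
    exact mem_spectrum_of_mulVec_eq_smul hv0 hv
  have : Nonempty n := ⟨i⟩
  have hbelow := hA.le_eigenvalues_of_forall_le_dotProduct_mulVec hle
  exact le_antisymm (hi ▸ ciInf_le ⟨μ, Set.forall_mem_range.mpr hbelow⟩ i) (le_ciInf hbelow)

end Matrix.IsHermitian

end Spectrum

theorem le_quadratic_of_sub_mul_sub_eq_sq {μ p q r a b : ℝ} (hp : μ < p)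
    (h : (p - μ) * (r - μ) = q ^ 2) :
    μ * (a ^ 2 + b ^ 2) ≤ p * a ^ 2 + 2 * q * a * b + r * b ^ 2 := by
  have hsq : (p - μ) * (p * a ^ 2 + 2 * q * a * b + r * b ^ 2 - μ * (a ^ 2 + b ^ 2)) =
      ((p - μ) * a + q * b) ^ 2 := by linear_combination b ^ 2 * h
  have := (mul_nonneg_iff_of_pos_left (sub_pos.mpr hp)).mp (hsq ▸ sq_nonneg _)
  linarith

section Rmat

variable {d : ℕ} {m₂ m₃ m₄ μ : ℝ}

theorem Rmat_mulVec_inl (x : Fin 1 ⊕ Fin d ⊕ Fin 1 → ℝ) (i : Fin 1) :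
    (Rmat d m₂ m₃ m₄ *ᵥ x) (.inl i) = x (.inl 0) + d * m₂ * x (.inr (.inr 0)) := by
  simp [mulVec, dotProduct, Rmat, Fintype.sum_sum_type]

theorem Rmat_mulVec_inr_inl (x : Fin 1 ⊕ Fin d ⊕ Fin 1 → ℝ) (k : Fin d) :
    (Rmat d m₂ m₃ m₄ *ᵥ x) (.inr (.inl k)) = m₂ * x (.inr (.inl k)) + m₃ * x (.inr (.inr 0)) := by
  simp [mulVec, dotProduct, Rmat, Fintype.sum_sum_type]

theorem Rmat_mulVec_inr_inr (x : Fin 1 ⊕ Fin d ⊕ Fin 1 → ℝ) (i : Fin 1) :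
    (Rmat d m₂ m₃ m₄ *ᵥ x) (.inr (.inr i)) = d * m₂ * x (.inl 0) + m₃ * ∑ k, x (.inr (.inl k))
      + (d * (m₄ - m₂ ^ 2) + d ^ 2 * m₂ ^ 2) * x (.inr (.inr 0)) := by
  simp [mulVec, dotProduct, Rmat, Fintype.sum_sum_type, Finset.mul_sum]
  ring

theorem dotProduct_Rmat_mulVec (x : Fin 1 ⊕ Fin d ⊕ Fin 1 → ℝ) :
    x ⬝ᵥ (Rmat d m₂ m₃ m₄ *ᵥ x) =
      x (.inl 0) ^ 2 + 2 * (d * m₂) * x (.inl 0) * x (.inr (.inr 0))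
        + m₂ * ∑ k, x (.inr (.inl k)) ^ 2 + 2 * m₃ * x (.inr (.inr 0)) * ∑ k, x (.inr (.inl k))
        + (d * (m₄ - m₂ ^ 2) + d ^ 2 * m₂ ^ 2) * x (.inr (.inr 0)) ^ 2 := by
  have hmid : ∑ k, x (.inr (.inl k)) * (m₂ * x (.inr (.inl k)) + m₃ * x (.inr (.inr 0))) =
      m₂ * ∑ k, x (.inr (.inl k)) ^ 2 + m₃ * x (.inr (.inr 0)) * ∑ k, x (.inr (.inl k)) := by
    rw [Finset.mul_sum, Finset.mul_sum, ← Finset.sum_add_distrib]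
    exact Finset.sum_congr rfl fun _ _ ↦ by ring
  simp only [dotProduct, Fintype.sum_sum_type, Fin.sum_univ_one, Rmat_mulVec_inl,
    Rmat_mulVec_inr_inl, Rmat_mulVec_inr_inr, hmid]
  ring

theorem le_dotProduct_Rmat_mulVec (hμ₁ : μ < 1) (hμ₂ : μ ≤ m₂)
    (h : (1 - μ) * (d * (m₄ - m₂ ^ 2) + d ^ 2 * m₂ ^ 2 - μ) = (d * m₂) ^ 2)
    (x : Fin 1 ⊕ Fin d ⊕ Fin 1 → ℝ) : μ * (x ⬝ᵥ x) ≤ x ⬝ᵥ (Rmat d m₂ 0 m₄ *ᵥ x) := by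
  have hcorner := le_quadratic_of_sub_mul_sub_eq_sq (a := x (.inl 0)) (b := x (.inr (.inr 0))) hμ₁ h
  have hmiddle : μ * ∑ k, x (.inr (.inl k)) ^ 2 ≤ m₂ * ∑ k, x (.inr (.inl k)) ^ 2 :=
    mul_le_mul_of_nonneg_right hμ₂ (Finset.sum_nonneg fun _ _ ↦ sq_nonneg _)
  rw [dotProduct_Rmat_mulVec]
  simp only [dotProduct, Fintype.sum_sum_type, Fin.sum_univ_one, ← sq]
  linarith

theorem Rmat_mulVec_eq_smul
    (h : (1 - μ) * (d * (m₄ - m₂ ^ 2) + d ^ 2 * m₂ ^ 2 - μ) = (d * m₂) ^ 2) :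
    Rmat d m₂ 0 m₄ *ᵥ Sum.elim (fun _ ↦ d * m₂) (Sum.elim 0 fun _ ↦ μ - 1) =
      μ • Sum.elim (fun _ ↦ d * m₂) (Sum.elim 0 fun _ ↦ μ - 1) := by
  ext (i | k | i)
  · simp only [Rmat_mulVec_inl, Sum.elim_inl, Sum.elim_inr, Pi.smul_apply, smul_eq_mul]
    ring
  · simp [Rmat_mulVec_inr_inl]
  · simp only [Rmat_mulVec_inr_inr, Sum.elim_inl, Sum.elim_inr, Pi.zero_apply, Pi.smul_apply,
      smul_eq_mul, Finset.sum_const_zero, mul_zero, add_zero]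
    linear_combination -h

theorem iInf_eigenvalues_Rmat_eq (hH : (Rmat d m₂ 0 m₄).IsHermitian) (hμ₁ : μ < 1) (hμ₂ : μ ≤ m₂)
    (h : (1 - μ) * (d * (m₄ - m₂ ^ 2) + d ^ 2 * m₂ ^ 2 - μ) = (d * m₂) ^ 2) :
    ⨅ i, hH.eigenvalues i = μ := by
  refine hH.iInf_eigenvalues_eq (le_dotProduct_Rmat_mulVec hμ₁ hμ₂ h) (fun hv ↦ ?_)
    (Rmat_mulVec_eq_smul h)
  have := congrFun hv (.inr (.inr 0))
  simp only [Sum.elim_inr, Pi.zero_apply] at this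
  linarith

end Rmat

theorem sub_sqrt_div_ninety_quadratic_eq_zero {ζ D : ℝ} (hD : 720 * D ≤ ζ ^ 2) :
    45 * ((ζ - √(ζ ^ 2 - 720 * D)) / 90) ^ 2 - ζ * ((ζ - √(ζ ^ 2 - 720 * D)) / 90) + 4 * D = 0 := by
  linear_combination Real.sq_sqrt (sub_nonneg.mpr hD) / 180

theorem sub_sqrt_div_ninety_lt_one_third {D : ℝ} (hD : 0 ≤ D) :
    ((5 * D ^ 2 + 4 * D + 45) - √((5 * D ^ 2 + 4 * D + 45) ^ 2 - 720 * D)) / 90 < 1 / 3 := by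
  have : 5 * D ^ 2 + 4 * D + 45 - 30 < √((5 * D ^ 2 + 4 * D + 45) ^ 2 - 720 * D) :=
    (Real.lt_sqrt (by nlinarith)).mpr (by nlinarith [sq_nonneg (5 * D - 4)])
  linarith

theorem Rmat_uniform_min_eigenvalue_general (d : ℕ)
    (hH : (Rmat d (1 / 3) 0 (1 / 5)).IsHermitian) :
    (⨅ i, hH.eigenvalues i) =
        ((5 * d ^ 2 + 4 * d + 45 : ℝ) -
            Real.sqrt ((5 * d ^ 2 + 4 * d + 45 : ℝ) ^ 2 - 720 * d)) / 90 ∧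
      ((5 * d ^ 2 + 4 * d + 45 : ℝ) -
          Real.sqrt ((5 * d ^ 2 + 4 * d + 45 : ℝ) ^ 2 - 720 * d)) / 90 < 1 / 3 := by
  have hd : (0 : ℝ) ≤ d := d.cast_nonneg
  have hlt := sub_sqrt_div_ninety_lt_one_third hd
  have hroot := sub_sqrt_div_ninety_quadratic_eq_zero (ζ := 5 * d ^ 2 + 4 * d + 45) (D := d)
    (by nlinarith [sq_nonneg ((5 * d ^ 2 + 4 * d : ℝ) - 45)])
  exact ⟨iInf_eigenvalues_Rmat_eq hH (by linarith) hlt.le (by linear_combination hroot / 45), hlt⟩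

/-- For the uniform distribution on `[-1,1]` (`m₂ = 1/3`, `m₃ = 0`, `m₄ = 1/5`), the
smallest eigenvalue of `R_d` equals `(ζ − √(ζ² − 720 d))/90` with `ζ = 5d² + 4d + 45`,
and this value is strictly less than `1/3`. -/
theorem Rmat_uniform_min_eigenvalue (d : ℕ) (hd : 1 ≤ d)
    (hH : (Rmat d (1 / 3) 0 (1 / 5)).IsHermitian) :
    (⨅ i, hH.eigenvalues i) =
        ((5 * d ^ 2 + 4 * d + 45 : ℝ) -
            Real.sqrt ((5 * d ^ 2 + 4 * d + 45 : ℝ) ^ 2 - 720 * d)) / 90 ∧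
      ((5 * d ^ 2 + 4 * d + 45 : ℝ) -
          Real.sqrt ((5 * d ^ 2 + 4 * d + 45 : ℝ) ^ 2 - 720 * d)) / 90 < 1 / 3 :=
  Rmat_uniform_min_eigenvalue_general d hH
end
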